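/- arXiv:2501.02441 — 2 statements merged into one kernel-verified Lean document; each statement's English description precedes it below -/
import Mathlib

section
/- Let ν be a probability measure on E and suppose that ∫ e^{λ h} dμ_0 < ∞ and ∫ e^{−λ h} dν < ∞ for every λ > 0. Define S_ν = − inf_{λ_1 > 0, λ_2 > 0} [ (λ_2/(λ_1+λ_2)) · log ∫ e^{λ_1 h} dμ_0 + (λ_1/(λ_1+λ_2)) · log ∫ e^{−λ_2 h} dν ]. Then for every b ∈ (0,1) there exists N such that for all n ≥ N, inf_{γ ∈ ℝ} [ ℙ_{μ_0^{⊗n}}( ∑_{t=1}^n h(Y_t) ≥ γ ) + ℙ_{ν^{⊗n}}( ∑_{t=1}^n h(Y_t) < γ ) ]^{1/n} ≥ b · e^{−S_ν}; that is, no choice of threshold for the test based on ∑ h(Y_t) can achieve a sum of type I and type II errors with exponential decay rate faster than S_ν. -/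
/-!
Write `Λ₀ = cgf h μ₀`, `Λ₁ = cgf (-h) ν` and `F(s) = Λ(s) - s Λ'(s) ≤ 0`. Tilting `μ₀` by
`exp (s h)` moves the mean of `h` to `Λ₀'(s)`; Chebyshev's inequality under the tilted product
measure then gives Cramér's lower bound `μ₀ⁿ(∑ h > n c) ≥ exp (n (F₀(s) - o(1)))` for all
`c < Λ₀'(s)`, and likewise for `ν` and `-h`. The hypothesis on `m = -S` reads
`(s + t) m ≤ t F₀(s) + s F₁(t) + s t (Λ₀'(s) + Λ₁'(t))`; since `F → 0` at `0⁺`, the intermediate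
value theorem produces `s, t` with `F₀(s), F₁(t) ≥ m - ε` and `Λ₀'(s) > -Λ₁'(t)`, so that every
threshold is covered by one of the two bounds. If no such pair exists, the tilted means separate:
`h ≤ c` `μ₀`-a.s. and `h ≥ c` `ν`-a.s., and letting `s, t → ∞` gives
`μ₀(h ≥ c), ν(h ≤ c) ≥ exp m`, which bounds both errors through product events.
-/

open MeasureTheory ProbabilityTheory Filter Set ENNReal Topology

namespace MeasureTheory.Measure

theorem pi_tilted {ι : Type*} [Fintype ι] {α : ι → Type*} [∀ i, MeasurableSpace (α i)]
    (μ : ∀ i, Measure (α i)) [∀ i, SigmaFinite (μ i)] (f : ∀ i, α i → ℝ) :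
    Measure.pi (fun i => (μ i).tilted (f i)) = (Measure.pi μ).tilted (fun x => ∑ i, f i (x i)) := by
  refine pi_eq fun s hs => ?_
  rw [tilted_apply_eq_ofReal_integral' _ (MeasurableSet.univ_pi hs)]
  simp_rw [tilted_apply_eq_ofReal_integral' _ (hs _)]
  rw [← ENNReal.ofReal_prod_of_nonneg fun i _ => setIntegral_nonneg (hs i) fun x _ => by positivity]
  simp_rw [Real.exp_sum, integral_fintype_prod_eq_prod (fun i x => Real.exp (f i x)),
    Measure.restrict_pi_pi, ← Finset.prod_div_distrib]
  rw [integral_fintype_prod_eq_prod (fun i x => Real.exp (f i x) / ∫ x, Real.exp (f i x) ∂μ i)]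

variable {α : Type*} [MeasurableSpace α]

theorem tilted_apply_le_of_le (μ : Measure α) {f : α → ℝ} {s : Set α} (hs : MeasurableSet s)
    {C : ℝ} (hC : ∀ x ∈ s, f x ≤ C) :
    μ.tilted f s ≤ ENNReal.ofReal (Real.exp C / ∫ x, Real.exp (f x) ∂μ) * μ s := by
  rw [tilted_apply' _ _ hs, ← setLIntegral_const]
  refine setLIntegral_mono measurable_const fun x hx => ENNReal.ofReal_le_ofReal ?_
  gcongr
  exact hC x hx

variable {ι : Type*} [Fintype ι]

theorem measure_pow_card_le_pi_sum_ge (μ : Measure α) [SigmaFinite μ] (X : α → ℝ) (c : ℝ) :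
    μ {x | c ≤ X x} ^ Fintype.card ι
      ≤ Measure.pi (fun _ : ι => μ) {y | Fintype.card ι * c ≤ ∑ i, X (y i)} := by
  rw [← Finset.card_univ, ← Finset.prod_const, ← pi_pi]
  refine measure_mono fun y hy => ?_
  simp only [Set.mem_pi, Set.mem_univ, Set.mem_ofPred_eq, forall_const] at hy ⊢
  have := Finset.card_nsmul_le_sum Finset.univ (fun i => X (y i)) c fun i _ => hy i
  rwa [Finset.card_univ, nsmul_eq_mul] at this

theorem pi_sum_ge_le_variance_div_sq (μ : Measure α) [IsProbabilityMeasure μ] {X : α → ℝ}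
    (hX : MemLp X 2 μ) {c : ℝ} (hc : 0 < c) :
    Measure.pi (fun _ : ι => μ) {y | c ≤ |∑ i, X (y i) - Fintype.card ι * μ[X]|}
      ≤ ENNReal.ofReal (Fintype.card ι * Var[X; μ] / c ^ 2) := by
  have hXi : ∀ i : ι, MemLp (fun y : ι → α => X (y i)) 2 (Measure.pi fun _ => μ) :=
    fun i => hX.comp_measurePreserving (measurePreserving_eval _ i)
  have hmean : ∫ y, ∑ i, X (y i) ∂(Measure.pi fun _ : ι => μ) = Fintype.card ι * μ[X] := by
    rw [integral_finsetSum _ fun i _ => (hXi i).integrable one_le_two]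
    simp [integral_comp_eval (μ := fun _ : ι => μ) hX.aestronglyMeasurable]
  have hvar : Var[∑ i, fun y : ι → α => X (y i); Measure.pi fun _ => μ]
      = Fintype.card ι * Var[X; μ] := by
    simp [variance_sum_pi (μ := fun _ : ι => μ) (X := fun _ => X) fun _ => hX]
  have := meas_ge_le_variance_div_sq (memLp_finsetSum' Finset.univ fun i _ => hXi i) hc
  simp only [Finset.sum_apply] at this
  rwa [hmean, hvar] at this

end MeasureTheory.Measure

lemma nonpos_of_forall_pos_mul_le {a b : ℝ} (h : ∀ t > 0, t * a ≤ b) : a ≤ 0 := by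
  by_contra! ha
  have := h ((|b| + 1) / a) (by positivity)
  rw [div_mul_cancel₀ _ ha.ne'] at this
  linarith [le_abs_self b]

lemma forall_le_or_exists_eq_of_continuousOn_Ioi {F : ℝ → ℝ} (hF : ContinuousOn F (Ioi 0))
    {r : ℝ} (h0 : ∀ᶠ t in 𝓝[>] 0, r < F t) : (∀ t > 0, r ≤ F t) ∨ ∃ u > 0, F u = r := by
  refine or_iff_not_imp_left.2 fun h => ?_
  push Not at h
  obtain ⟨s, hs, hFs⟩ := h
  obtain ⟨t₀, hFt₀, ht₀⟩ := (h0.and (Ioo_mem_nhdsGT hs)).exists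
  obtain ⟨u, hu, hFu⟩ := intermediate_value_Icc' ht₀.2.le
    (hF.mono fun x hx => ht₀.1.trans_le hx.1) ⟨hFs.le, hFt₀.le⟩
  exact ⟨u, ht₀.1.trans_le hu.1, hFu⟩

section RateBound

variable {F₀ g₀ F₁ g₁ : ℝ → ℝ} {m : ℝ}

lemma exists_add_pos_of_eq
    (hK : ∀ s t, 0 < s → 0 < t → (s + t) * m ≤ t * F₀ s + s * F₁ t + s * t * (g₀ s + g₁ t))
    (hF₀ : ∀ s > 0, F₀ s ≤ 0) {r : ℝ} (hr : r < m) {v : ℝ} (hv : 0 < v) (hFv : F₁ v = r) :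
    ∃ s > 0, 0 < g₀ s + g₁ v := by
  by_contra! hg
  have : m - r ≤ 0 := nonpos_of_forall_pos_mul_le (b := -(v * m)) fun s hs => by
    have h1 := mul_nonpos_of_nonneg_of_nonpos hv.le (hF₀ s hs)
    have h2 := mul_nonpos_of_nonneg_of_nonpos (mul_pos hs hv).le (hg s hs)
    have := hK s v hs hv
    rw [hFv] at this
    linarith
  linarith

theorem exists_le_le_add_pos
    (hK : ∀ s t, 0 < s → 0 < t → (s + t) * m ≤ t * F₀ s + s * F₁ t + s * t * (g₀ s + g₁ t))
    (hF₀ : ContinuousOn F₀ (Ioi 0)) (hF₁ : ContinuousOn F₁ (Ioi 0))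
    (hF₀_nonpos : ∀ s > 0, F₀ s ≤ 0) (hF₁_nonpos : ∀ t > 0, F₁ t ≤ 0) {ε : ℝ} (hε : 0 < ε)
    (hF₀_zero : ∀ᶠ s in 𝓝[>] 0, m - ε < F₀ s) (hF₁_zero : ∀ᶠ t in 𝓝[>] 0, m - ε < F₁ t)
    (hg : ∃ s t, 0 < s ∧ 0 < t ∧ 0 < g₀ s + g₁ t) :
    ∃ s t, 0 < s ∧ 0 < t ∧ m - ε ≤ F₀ s ∧ m - ε ≤ F₁ t ∧ 0 < g₀ s + g₁ t := by
  have hKswap : ∀ t s, 0 < t → 0 < s →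
      (t + s) * m ≤ s * F₁ t + t * F₀ s + t * s * (g₁ t + g₀ s) := fun t s ht hs => by
    linarith [hK s t hs ht]
  have hr : m - ε < m := by linarith
  rcases forall_le_or_exists_eq_of_continuousOn_Ioi hF₀ hF₀_zero with h₀ | ⟨u, hu, hFu⟩ <;>
    rcases forall_le_or_exists_eq_of_continuousOn_Ioi hF₁ hF₁_zero with h₁ | ⟨v, hv, hFv⟩
  · obtain ⟨s, t, hs, ht, hst⟩ := hg
    exact ⟨s, t, hs, ht, h₀ s hs, h₁ t ht, hst⟩
  · obtain ⟨s, hs, hst⟩ := exists_add_pos_of_eq hK hF₀_nonpos hr hv hFv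
    exact ⟨s, v, hs, hv, h₀ s hs, hFv.ge, hst⟩
  · obtain ⟨t, ht, hts⟩ := exists_add_pos_of_eq hKswap hF₁_nonpos hr hu hFu
    exact ⟨u, t, hu, ht, hFu.ge, h₁ t ht, by linarith⟩
  · refine ⟨u, v, hu, hv, hFu.ge, hFv.ge, ?_⟩
    by_contra! huv
    have := hK u v hu hv
    rw [hFu, hFv] at this
    nlinarith [mul_nonpos_of_nonneg_of_nonpos (mul_pos hu hv).le huv]

end RateBound

namespace ProbabilityTheory

section CumulantGeneratingFunction

variable {Ω : Type*} [MeasurableSpace Ω] {μ : Measure Ω} {X : Ω → ℝ}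

lemma Ioi_subset_interior_integrableExpSet (hX : Ioi 0 ⊆ integrableExpSet X μ) :
    Ioi 0 ⊆ interior (integrableExpSet X μ) :=
  interior_maximal hX isOpen_Ioi

lemma continuousOn_cgf_Ioi (hX : Ioi 0 ⊆ integrableExpSet X μ) :
    ContinuousOn (cgf X μ) (Ioi 0) :=
  (analyticOnNhd_cgf.mono (Ioi_subset_interior_integrableExpSet hX)).continuousOn

lemma continuousOn_deriv_cgf_Ioi (hX : Ioi 0 ⊆ integrableExpSet X μ) :
    ContinuousOn (deriv (cgf X μ)) (Ioi 0) :=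
  (analyticOnNhd_cgf.deriv.mono (Ioi_subset_interior_integrableExpSet hX)).continuousOn

lemma monotoneOn_deriv_cgf (hX : Ioi 0 ⊆ integrableExpSet X μ) :
    MonotoneOn (deriv (cgf X μ)) (Ioi 0) := by
  have hint := Ioi_subset_interior_integrableExpSet hX
  refine monotoneOn_of_deriv_nonneg (convex_Ioi 0) (continuousOn_deriv_cgf_Ioi hX) ?_
    fun t ht => ?_
  · exact (analyticOnNhd_cgf.deriv.mono (by rwa [interior_Ioi])).differentiableOn
  · rw [interior_Ioi] at ht
    have h2 : deriv (deriv (cgf X μ)) = iteratedDeriv 2 (cgf X μ) := by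
      rw [iteratedDeriv_succ, iteratedDeriv_one]
    rw [h2, ← variance_tilted_mul (hint ht)]
    exact variance_nonneg _ _

variable [IsProbabilityMeasure μ]

lemma tendsto_mgf_nhdsGT_zero (hX : Ioi 0 ⊆ integrableExpSet X μ) :
    Tendsto (mgf X μ) (𝓝[>] 0) (𝓝 1) := by
  have hX₁ : Integrable (fun ω => Real.exp (X ω)) μ := by
    simpa using integrable_of_mem_integrableExpSet (hX (mem_Ioi.2 one_pos))
  have hlim : Tendsto (fun t => ∫ ω, Real.exp (t * X ω) ∂μ) (𝓝[>] 0) (𝓝 (∫ _, (1 : ℝ) ∂μ)) := by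
    refine tendsto_integral_filter_of_dominated_convergence (fun ω => 1 + Real.exp (X ω)) ?_ ?_
      ((integrable_const 1).add hX₁) (ae_of_all _ fun ω => ?_)
    · filter_upwards [self_mem_nhdsWithin] with t ht using (hX ht).aestronglyMeasurable
    · filter_upwards [Ioc_mem_nhdsGT one_pos] with t ht
      refine ae_of_all _ fun ω => ?_
      rw [Real.norm_eq_abs, abs_of_pos (Real.exp_pos _)]
      rcases le_total 0 (X ω) with h | h
      · have : Real.exp (t * X ω) ≤ Real.exp (X ω) := Real.exp_le_exp.2 (by nlinarith [ht.2])
        linarith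
      · have : Real.exp (t * X ω) ≤ 1 := Real.exp_le_one_iff.2 (by nlinarith [ht.1])
        linarith [Real.exp_pos (X ω)]
    · have : Continuous fun t : ℝ => Real.exp (t * X ω) := by fun_prop
      simpa using (this.tendsto 0).mono_left nhdsWithin_le_nhds
  rw [integral_const, probReal_univ, one_smul] at hlim
  exact hlim

lemma tendsto_cgf_nhdsGT_zero (hX : Ioi 0 ⊆ integrableExpSet X μ) :
    Tendsto (cgf X μ) (𝓝[>] 0) (𝓝 0) := by
  have := (Real.continuousAt_log one_ne_zero).tendsto.comp (tendsto_mgf_nhdsGT_zero hX)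
  rwa [Real.log_one] at this

lemma cgf_le_mul_deriv_cgf (hX : Ioi 0 ⊆ integrableExpSet X μ) {t : ℝ} (ht : 0 < t) :
    cgf X μ t ≤ t * deriv (cgf X μ) t := by
  -- integrate `x + 1 ≤ exp x` at `x = cgf X μ t - t X` against the tilted measure
  have hin := Ioi_subset_interior_integrableExpSet hX ht
  have := isProbabilityMeasure_tilted (hX ht)
  have hone : ∫ ω, Real.exp (cgf X μ t - t * X ω) ∂μ.tilted (t * X ·) = 1 := by
    rw [integral_tilted_mul_eq_cgf _ (hX ht)]
    simp [smul_eq_mul, ← Real.exp_add]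
  have hXint := (memLp_tilted_mul hin 1).integrable le_rfl
  have hlin : ∫ ω, (cgf X μ t + 1 - t * X ω) ∂μ.tilted (t * X ·)
      = cgf X μ t + 1 - t * deriv (cgf X μ) t := by
    rw [integral_sub (integrable_const _) (hXint.const_mul t), integral_const_mul,
      integral_tilted_mul_self hin]
    simp
  have hle := integral_mono (f := fun ω => cgf X μ t + 1 - t * X ω)
    ((integrable_const _).sub (hXint.const_mul t))
    (Integrable.of_integral_ne_zero (hone ▸ one_ne_zero))
    fun ω => (le_of_eq (by ring)).trans (Real.add_one_le_exp (cgf X μ t - t * X ω))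
  linarith

lemma tendsto_cgf_sub_mul_deriv_cgf_nhdsGT_zero (hX : Ioi 0 ⊆ integrableExpSet X μ) :
    Tendsto (fun t => cgf X μ t - t * deriv (cgf X μ) t) (𝓝[>] 0) (𝓝 0) := by
  set g₁ := max (deriv (cgf X μ) 1) 0
  have hlower : Tendsto (fun t => cgf X μ t - t * g₁) (𝓝[>] 0) (𝓝 0) := by
    simpa using (tendsto_cgf_nhdsGT_zero hX).sub
      ((tendsto_nhdsWithin_of_tendsto_nhds (continuous_id.tendsto 0)).mul_const g₁)
  refine tendsto_of_tendsto_of_tendsto_of_le_of_le' hlower tendsto_const_nhds ?_ ?_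
  · filter_upwards [Ioc_mem_nhdsGT one_pos] with t ht
    have hmono := monotoneOn_deriv_cgf hX ht.1 (mem_Ioi.2 one_pos) ht.2
    have : t * deriv (cgf X μ) t ≤ t * g₁ :=
      mul_le_mul_of_nonneg_left (hmono.trans (le_max_left _ _)) ht.1.le
    linarith
  · filter_upwards [self_mem_nhdsWithin] with t ht
    linarith [cgf_le_mul_deriv_cgf hX ht]

lemma exists_lt_deriv_cgf (hX : Ioi 0 ⊆ integrableExpSet X μ) {c ε : ℝ}
    (hc : μ {ω | c ≤ X ω} ≠ 0) (hε : 0 < ε) : ∃ t > 0, c - ε < deriv (cgf X μ) t := by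
  -- `cgf X μ b ≥ b c + log μ{c ≤ X}`, so for large `b` the slope of `cgf X μ` on `[1, b]`,
  -- a value of its derivative by the mean value theorem, exceeds `c - ε`
  have hp : 0 < μ.real {ω | c ≤ X ω} := ENNReal.toReal_pos hc (measure_ne_top _ _)
  have hcgf : ∀ t > 0, t * c + Real.log (μ.real {ω | c ≤ X ω}) ≤ cgf X μ t := by
    intro t ht
    have hmgf := mgf_pos (μ := μ) (hX ht)
    have h := measure_ge_le_exp_mul_mgf c ht.le (hX ht)
    rw [cgf, ← Real.log_exp (t * c), ← Real.log_mul (Real.exp_pos _).ne' hp.ne']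
    refine Real.log_le_log (by positivity) ?_
    calc Real.exp (t * c) * μ.real {ω | c ≤ X ω}
        ≤ Real.exp (t * c) * (Real.exp (-t * c) * mgf X μ t) := by gcongr
      _ = mgf X μ t := by rw [← mul_assoc, ← Real.exp_add]; simp
  set K := cgf X μ 1 - Real.log (μ.real {ω | c ≤ X ω}) - c + ε
  set b := max 2 (K / ε + 1)
  have hb : 1 < b := lt_of_lt_of_le one_lt_two (le_max_left _ _)
  have hbK : K < ε * b :=
    calc K < ε * (K / ε + 1) := by rw [mul_add, mul_div_cancel₀ _ hε.ne']; linarith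
      _ ≤ ε * b := by gcongr; exact le_max_right _ _
  have hdiff : DifferentiableOn ℝ (cgf X μ) (Icc 1 b) :=
    (analyticOnNhd_cgf.mono ((Icc_subset_Ioi_iff hb.le).2 one_pos |>.trans
      (Ioi_subset_interior_integrableExpSet hX))).differentiableOn
  obtain ⟨ξ, hξ, hslope⟩ := exists_deriv_eq_slope (cgf X μ) hb hdiff.continuousOn
    (hdiff.mono Ioo_subset_Icc_self)
  refine ⟨ξ, one_pos.trans hξ.1, ?_⟩
  rw [hslope, lt_div_iff₀ (by linarith)]
  nlinarith [hcgf b (one_pos.trans hb)]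

lemma ae_le_of_forall_deriv_cgf_le (hX : Ioi 0 ⊆ integrableExpSet X μ) {c : ℝ}
    (hc : ∀ t > 0, deriv (cgf X μ) t ≤ c) : ∀ᵐ ω ∂μ, X ω ≤ c := by
  have hunion : {ω | ¬X ω ≤ c} = ⋃ k : ℕ, {ω | c + 1 / (k + 1) ≤ X ω} := by
    ext ω
    simp only [not_le, mem_ofPred_eq, mem_iUnion]
    refine ⟨fun h => ?_, fun ⟨k, hk⟩ => lt_of_lt_of_le (by simp; positivity) hk⟩
    obtain ⟨k, hk⟩ := exists_nat_one_div_lt (sub_pos.2 h)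
    exact ⟨k, by linarith⟩
  rw [ae_iff, hunion, measure_iUnion_null_iff]
  intro k
  by_contra hk
  obtain ⟨t, ht, hlt⟩ := exists_lt_deriv_cgf hX hk (by positivity : (0 : ℝ) < 1 / (k + 1))
  linarith [hc t ht]

lemma cgf_le_mul_of_ae_le {t : ℝ} (ht : 0 ≤ t) (hX : Integrable (fun ω => Real.exp (t * X ω)) μ)
    {c : ℝ} (hc : ∀ᵐ ω ∂μ, X ω ≤ c) : cgf X μ t ≤ t * c := by
  rw [cgf, Real.log_le_iff_le_exp (mgf_pos hX)]
  calc mgf X μ t ≤ ∫ _, Real.exp (t * c) ∂μ := integral_mono_ae hX (integrable_const _)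
        (hc.mono fun ω hω => Real.exp_le_exp.2 (mul_le_mul_of_nonneg_left hω ht))
    _ = Real.exp (t * c) := by simp

lemma tendsto_mgf_mul_exp_atTop (hXm : Measurable X) {c : ℝ} (hc : ∀ᵐ ω ∂μ, X ω ≤ c) :
    Tendsto (fun t => mgf X μ t * Real.exp (-(t * c))) atTop (𝓝 (μ.real {ω | c ≤ X ω})) := by
  have hset : MeasurableSet {ω | c ≤ X ω} := measurableSet_le measurable_const hXm
  have hmgf : ∀ t, mgf X μ t * Real.exp (-(t * c)) = ∫ ω, Real.exp (t * (X ω - c)) ∂μ := by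
    intro t
    rw [mgf, ← integral_mul_const]
    congr with ω
    rw [← Real.exp_add]
    ring_nf
  simp_rw [hmgf, ← integral_indicator_one hset]
  refine tendsto_integral_filter_of_dominated_convergence (fun _ => 1) ?_ ?_
    (integrable_const 1) ?_
  · exact Eventually.of_forall fun t => by fun_prop
  · filter_upwards [Ici_mem_atTop 0] with t ht
    filter_upwards [hc] with ω hω
    rw [Real.norm_eq_abs, abs_of_pos (Real.exp_pos _), Real.exp_le_one_iff]
    exact mul_nonpos_of_nonneg_of_nonpos ht (by linarith)
  · filter_upwards [hc] with ω hω
    rcases hω.lt_or_eq with hlt | heq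
    · rw [indicator_of_notMem (by simpa using hlt)]
      exact Real.tendsto_exp_atBot.comp (tendsto_id.atTop_mul_const_of_neg (sub_neg.2 hlt))
    · rw [indicator_of_mem (by simp [heq])]
      simp [heq]

lemma ofReal_exp_le_measure_ge_of_ae_le (hX : Ioi 0 ⊆ integrableExpSet X μ)
    (hXm : Measurable X) {c m : ℝ} (hc : ∀ᵐ ω ∂μ, X ω ≤ c)
    (hm : ∀ t > 0, m ≤ cgf X μ t - t * c) : ENNReal.ofReal (Real.exp m) ≤ μ {ω | c ≤ X ω} := by
  refine ENNReal.ofReal_le_of_le_toReal (ge_of_tendsto (tendsto_mgf_mul_exp_atTop hXm hc) ?_)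
  filter_upwards [Ioi_mem_atTop 0] with t ht
  rw [← exp_cgf (hX ht), ← Real.exp_add]
  exact Real.exp_le_exp.2 (by linarith [hm t ht])

end CumulantGeneratingFunction

section Cramer

variable {Ω : Type*} [MeasurableSpace Ω] {μ : Measure Ω} [IsProbabilityMeasure μ] {X : Ω → ℝ}

lemma half_le_pi_abs_sum_sub_lt (hX : MemLp X 2 μ) (hXm : Measurable X) {κ : ℝ} (hκ : 0 < κ)
    {n : ℕ} (hn : 2 * Var[X; μ] / κ ^ 2 < n) :
    1 / 2 ≤ Measure.pi (fun _ : Fin n => μ) {y | |∑ i, X (y i) - n * μ[X]| < n * κ} := by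
  have hn0 : (0 : ℝ) < n := lt_of_le_of_lt (by have := variance_nonneg X μ; positivity) hn
  set A := {y : Fin n → Ω | |∑ i, X (y i) - n * μ[X]| < n * κ}
  have hA : MeasurableSet A := measurableSet_lt (by fun_prop) measurable_const
  have hAc : Measure.pi (fun _ : Fin n => μ) Aᶜ ≤ 1 / 2 := by
    have hcompl : Aᶜ = {y | n * κ ≤ |∑ i, X (y i) - Fintype.card (Fin n) * μ[X]|} := by
      ext y; simp [A]
    rw [hcompl]
    refine (Measure.pi_sum_ge_le_variance_div_sq μ hX (mul_pos hn0 hκ)).trans ?_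
    rw [Fintype.card_fin, one_div, ← ENNReal.ofReal_ofNat 2, ← ENNReal.ofReal_inv_of_pos two_pos]
    refine ENNReal.ofReal_le_ofReal ?_
    rw [div_le_iff₀ (by positivity)]
    rw [div_lt_iff₀ (by positivity)] at hn
    nlinarith
  have htotal := measure_add_measure_compl (μ := Measure.pi fun _ : Fin n => μ) hA
  rw [measure_univ] at htotal
  refine (ENNReal.add_le_add_iff_right (a := 1 / 2) (by simp)).1 ?_
  calc 1 / 2 + 1 / 2 = (1 : ℝ≥0∞) := ENNReal.add_halves 1
    _ = _ := htotal.symm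
    _ ≤ _ := add_le_add_right hAc _

lemma pi_tilted_mul_le {t : ℝ} (ht : 0 ≤ t) (hX : Integrable (fun ω => Real.exp (t * X ω)) μ)
    {n : ℕ} {A : Set (Fin n → Ω)} (hA : MeasurableSet A) {b : ℝ}
    (hAb : ∀ y ∈ A, ∑ i, X (y i) ≤ n * b) :
    Measure.pi (fun _ => μ.tilted (t * X ·)) A
      ≤ ENNReal.ofReal (Real.exp (n * (t * b - cgf X μ t))) * Measure.pi (fun _ => μ) A := by
  rw [Measure.pi_tilted]
  refine (Measure.tilted_apply_le_of_le _ hA (C := n * (t * b)) fun y hy => ?_).trans_eq ?_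
  · rw [← Finset.mul_sum]
    nlinarith [hAb y hy]
  · simp_rw [Real.exp_sum, integral_fintype_prod_eq_pow (fun ω => Real.exp (t * X ω))]
    rw [← mgf, ← exp_cgf hX, ← Real.exp_nat_mul, ← Real.exp_sub, Fintype.card_fin]
    ring_nf

theorem exists_ofReal_exp_le_pi_sum_gt (hX : Ioi 0 ⊆ integrableExpSet X μ) (hXm : Measurable X)
    {t κ δ : ℝ} (ht : 0 < t) (hκ : 0 < κ) (hδ : 0 < δ) :
    ∃ N : ℕ, ∀ n ≥ N, ∀ c ≤ deriv (cgf X μ) t - κ,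
      ENNReal.ofReal (Real.exp (n * (cgf X μ t - t * deriv (cgf X μ) t - t * κ - δ)))
        ≤ Measure.pi (fun _ : Fin n => μ) {y | n * c < ∑ i, X (y i)} := by
  set g := deriv (cgf X μ) t
  have hin := Ioi_subset_interior_integrableExpSet hX ht
  have := isProbabilityMeasure_tilted (hX ht)
  obtain ⟨N, hN⟩ :=
    exists_nat_gt (max (2 * Var[X; μ.tilted (t * X ·)] / κ ^ 2) (Real.log 2 / δ))
  refine ⟨N, fun n hn c hc => ?_⟩
  have hn' := hN.trans_le (Nat.cast_le.2 hn)
  set A := {y : Fin n → Ω | |∑ i, X (y i) - n * g| < n * κ}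
  have hA : MeasurableSet A := measurableSet_lt (by fun_prop) measurable_const
  -- under the tilted product measure `A` has probability at least `1 / 2`, and on `A` the
  -- density of the tilted product measure is at most `exp (n (t (g + κ) - cgf X μ t))`
  have hhalf : 1 / 2 ≤ Measure.pi (fun _ : Fin n => μ.tilted (t * X ·)) A := by
    have := half_le_pi_abs_sum_sub_lt (memLp_tilted_mul hin 2) hXm hκ
      ((le_max_left _ _).trans_lt hn')
    rwa [integral_tilted_mul_self hin] at this
  have hchange := pi_tilted_mul_le ht.le (hX ht) hA (b := g + κ) fun y hy => by
    have := (abs_lt.1 (show |∑ i, X (y i) - n * g| < n * κ from hy)).2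
    linarith
  set a := ENNReal.ofReal (Real.exp (n * (t * (g + κ) - cgf X μ t)))
  have hexp : a * ENNReal.ofReal (Real.exp (n * (cgf X μ t - t * g - t * κ - δ))) ≤ 1 / 2 := by
    rw [mul_comm, ← ENNReal.ofReal_mul (Real.exp_nonneg _), ← Real.exp_add, one_div,
      ← ENNReal.ofReal_ofNat 2, ← ENNReal.ofReal_inv_of_pos two_pos,
      ← Real.exp_log (inv_pos.2 (two_pos : (0 : ℝ) < 2)), Real.log_inv]
    refine ENNReal.ofReal_le_ofReal (Real.exp_le_exp.2 ?_)
    have := (div_lt_iff₀ hδ).1 ((le_max_right _ _).trans_lt hn')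
    nlinarith
  have ha0 : a ≠ 0 := by simp [a, Real.exp_pos]
  refine le_trans ?_ (measure_mono (s := A) fun y hy => ?_)
  · rw [← ENNReal.mul_le_mul_iff_right ha0 ENNReal.ofReal_ne_top]
    exact hexp.trans (hhalf.trans hchange)
  · have := (abs_lt.1 (show |∑ i, X (y i) - n * g| < n * κ from hy)).1
    simp only [mem_ofPred_eq]
    nlinarith

end Cramer

section Threshold

variable {E : Type*} [MeasurableSpace E]

def HasThresholdLowerBound (μ₀ ν : Measure E) (h : E → ℝ) (r : ℝ) : Prop :=
  ∃ c₀ : ℝ, ∃ N : ℕ, ∀ n ≥ N,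
    (∀ c ≤ c₀, ENNReal.ofReal (Real.exp (n * r))
      ≤ Measure.pi (fun _ : Fin n => μ₀) {y | n * c ≤ ∑ i, h (y i)}) ∧
    (∀ c > c₀, ENNReal.ofReal (Real.exp (n * r))
      ≤ Measure.pi (fun _ : Fin n => ν) {y | ∑ i, h (y i) < n * c})

variable {μ₀ ν : Measure E} {h : E → ℝ}

lemma HasThresholdLowerBound.mono {r r' : ℝ} (H : HasThresholdLowerBound μ₀ ν h r)
    (hr : r' ≤ r) : HasThresholdLowerBound μ₀ ν h r' := by
  obtain ⟨c₀, N, hN⟩ := H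
  have hexp : ∀ n : ℕ, ENNReal.ofReal (Real.exp (n * r')) ≤ ENNReal.ofReal (Real.exp (n * r)) :=
    fun n => ENNReal.ofReal_le_ofReal (Real.exp_le_exp.2 (by gcongr))
  exact ⟨c₀, N, fun n hn => ⟨fun c hc => (hexp n).trans ((hN n hn).1 c hc),
    fun c hc => (hexp n).trans ((hN n hn).2 c hc)⟩⟩

lemma HasThresholdLowerBound.exists_le_add {r : ℝ} (H : HasThresholdLowerBound μ₀ ν h r) :
    ∃ N : ℕ, ∀ n ≥ N, ∀ γ : ℝ, ENNReal.ofReal (Real.exp (n * r))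
      ≤ Measure.pi (fun _ : Fin n => μ₀) {y | γ ≤ ∑ i, h (y i)}
        + Measure.pi (fun _ : Fin n => ν) {y | ∑ i, h (y i) < γ} := by
  obtain ⟨c₀, N, hN⟩ := H
  refine ⟨N + 1, fun n hn γ => ?_⟩
  have hn0 : (n : ℝ) ≠ 0 := by norm_cast; omega
  have hγ : (n : ℝ) * (γ / n) = γ := mul_div_cancel₀ γ hn0
  rcases le_or_gt (γ / n) c₀ with hc | hc
  · have := (hN n (by omega)).1 _ hc
    rw [hγ] at this
    exact this.trans le_self_add
  · have := (hN n (by omega)).2 _ hc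
    rw [hγ] at this
    exact this.trans le_add_self

variable [IsProbabilityMeasure μ₀] [IsProbabilityMeasure ν]

lemma hasThresholdLowerBound_of_tilt (hh : Measurable h) (h₀ : Ioi 0 ⊆ integrableExpSet h μ₀)
    (h₁ : Ioi 0 ⊆ integrableExpSet (-h) ν) {r s t : ℝ} (hs : 0 < s) (ht : 0 < t)
    (hFs : r < cgf h μ₀ s - s * deriv (cgf h μ₀) s)
    (hFt : r < cgf (-h) ν t - t * deriv (cgf (-h) ν) t)
    (hst : 0 < deriv (cgf h μ₀) s + deriv (cgf (-h) ν) t) :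
    HasThresholdLowerBound μ₀ ν h r := by
  set η := min (cgf h μ₀ s - s * deriv (cgf h μ₀) s - r)
    (cgf (-h) ν t - t * deriv (cgf (-h) ν) t - r)
  have hη : 0 < η := lt_min (by linarith) (by linarith)
  have hη₀ : η ≤ cgf h μ₀ s - s * deriv (cgf h μ₀) s - r := min_le_left _ _
  have hη₁ : η ≤ cgf (-h) ν t - t * deriv (cgf (-h) ν) t - r := min_le_right _ _
  set κ := min ((deriv (cgf h μ₀) s + deriv (cgf (-h) ν) t) / 2)
    (min (η / (2 * s)) (η / (2 * t)))
  have hκ : 0 < κ := lt_min (by linarith) (lt_min (by positivity) (by positivity))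
  have hκ₂ : κ ≤ (deriv (cgf h μ₀) s + deriv (cgf (-h) ν) t) / 2 := min_le_left _ _
  have hsκ : s * κ ≤ η / 2 := by
    have : κ ≤ η / (2 * s) := (min_le_right _ _).trans (min_le_left _ _)
    rw [le_div_iff₀ (by positivity)] at this
    linarith
  have htκ : t * κ ≤ η / 2 := by
    have : κ ≤ η / (2 * t) := (min_le_right _ _).trans (min_le_right _ _)
    rw [le_div_iff₀ (by positivity)] at this
    linarith
  obtain ⟨N₀, hN₀⟩ := exists_ofReal_exp_le_pi_sum_gt h₀ hh hs hκ (half_pos hη)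
  obtain ⟨N₁, hN₁⟩ := exists_ofReal_exp_le_pi_sum_gt h₁ hh.neg ht hκ (half_pos hη)
  refine ⟨deriv (cgf h μ₀) s - κ, max N₀ N₁, fun n hn => ⟨fun c hc => ?_, fun c hc => ?_⟩⟩
  · refine le_trans (ENNReal.ofReal_le_ofReal (Real.exp_le_exp.2 ?_))
      ((hN₀ n (le_of_max_le_left hn) c hc).trans
        (measure_mono (ofPred_subset_ofPred.2 fun _ => le_of_lt)))
    gcongr
    linarith
  · refine le_trans (ENNReal.ofReal_le_ofReal (Real.exp_le_exp.2 ?_))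
      ((hN₁ n (le_of_max_le_right hn) (-c) (by linarith)).trans (measure_mono fun y hy => ?_))
    · gcongr
      linarith
    · simp only [mem_ofPred_eq, Pi.neg_apply, Finset.sum_neg_distrib] at hy ⊢
      linarith

lemma hasThresholdLowerBound_of_ae_le (hh : Measurable h) (h₀ : Ioi 0 ⊆ integrableExpSet h μ₀)
    (h₁ : Ioi 0 ⊆ integrableExpSet (-h) ν) {m : ℝ}
    (hK : ∀ s t, 0 < s → 0 < t → (s + t) * m ≤ t * cgf h μ₀ s + s * cgf (-h) ν t) {c : ℝ}
    (hc₀ : ∀ᵐ x ∂μ₀, h x ≤ c) (hc₁ : ∀ᵐ x ∂ν, -h x ≤ -c) :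
    HasThresholdLowerBound μ₀ ν h m := by
  -- the `ν`-term of `hK` is at most `-s t c`; let `t → ∞`, and symmetrically `s → ∞`
  have hK₀ : ∀ s > 0, m ≤ cgf h μ₀ s - s * c := fun s hs => by
    have := nonpos_of_forall_pos_mul_le (a := m - (cgf h μ₀ s - s * c)) (b := -(s * m))
      fun t ht => by
        linarith [hK s t hs ht,
          mul_le_mul_of_nonneg_left (cgf_le_mul_of_ae_le ht.le (h₁ ht) hc₁) hs.le]
    linarith
  have hK₁ : ∀ t > 0, m ≤ cgf (-h) ν t - t * -c := fun t ht => by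
    have := nonpos_of_forall_pos_mul_le (a := m - (cgf (-h) ν t - t * -c)) (b := -(t * m))
      fun s hs => by
        linarith [hK s t hs ht,
          mul_le_mul_of_nonneg_left (cgf_le_mul_of_ae_le hs.le (h₀ hs) hc₀) ht.le]
    linarith
  have hp₀ := ofReal_exp_le_measure_ge_of_ae_le h₀ hh hc₀ hK₀
  have hp₁ := ofReal_exp_le_measure_ge_of_ae_le h₁ hh.neg hc₁ hK₁
  have hpow : ∀ n : ℕ, ENNReal.ofReal (Real.exp (n * m)) = ENNReal.ofReal (Real.exp m) ^ n :=
    fun n => by rw [← ENNReal.ofReal_pow (Real.exp_nonneg _), ← Real.exp_nat_mul]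
  refine ⟨c, 1, fun n hn => ⟨fun c' hc' => ?_, fun c' hc' => ?_⟩⟩
  · calc ENNReal.ofReal (Real.exp (n * m)) ≤ μ₀ {x | c ≤ h x} ^ Fintype.card (Fin n) := by
          rw [hpow, Fintype.card_fin]
          exact pow_le_pow_left' hp₀ n
      _ ≤ _ := Measure.measure_pow_card_le_pi_sum_ge μ₀ h c
      _ ≤ _ := measure_mono <| ofPred_subset_ofPred.2 fun y hy => by
          simp only [Fintype.card_fin] at hy
          exact (show (n : ℝ) * c' ≤ n * c by gcongr).trans hy
  · calc ENNReal.ofReal (Real.exp (n * m)) ≤ ν {x | -c ≤ (-h) x} ^ Fintype.card (Fin n) := by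
          rw [hpow, Fintype.card_fin]
          exact pow_le_pow_left' hp₁ n
      _ ≤ _ := Measure.measure_pow_card_le_pi_sum_ge ν (-h) (-c)
      _ ≤ _ := measure_mono <| ofPred_subset_ofPred.2 fun y hy => by
          simp only [Fintype.card_fin, Pi.neg_apply, Finset.sum_neg_distrib] at hy
          have : (n : ℝ) * c < n * c' := by gcongr
          linarith

lemma nonpos_of_forall_add_mul_le_cgf (h₀ : Ioi 0 ⊆ integrableExpSet h μ₀)
    (h₁ : Ioi 0 ⊆ integrableExpSet (-h) ν) {m : ℝ}
    (hK : ∀ s t, 0 < s → 0 < t → (s + t) * m ≤ t * cgf h μ₀ s + s * cgf (-h) ν t) : m ≤ 0 := by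
  have hlim := (tendsto_cgf_nhdsGT_zero h₀).add (tendsto_cgf_nhdsGT_zero h₁)
  rw [add_zero] at hlim
  have : 2 * m ≤ 0 := ge_of_tendsto hlim <| by
    filter_upwards [self_mem_nhdsWithin] with t (ht : 0 < t)
    have := hK t t ht ht
    nlinarith
  linarith

theorem exists_ofReal_exp_le_pi_add_pi (hh : Measurable h)
    (h₀ : Ioi 0 ⊆ integrableExpSet h μ₀) (h₁ : Ioi 0 ⊆ integrableExpSet (-h) ν) {m : ℝ}
    (hK : ∀ s t, 0 < s → 0 < t → (s + t) * m ≤ t * cgf h μ₀ s + s * cgf (-h) ν t) {ε : ℝ}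
    (hε : 0 < ε) :
    ∃ N : ℕ, ∀ n ≥ N, ∀ γ : ℝ, ENNReal.ofReal (Real.exp (n * (m - ε)))
      ≤ Measure.pi (fun _ : Fin n => μ₀) {y | γ ≤ ∑ i, h (y i)}
        + Measure.pi (fun _ : Fin n => ν) {y | ∑ i, h (y i) < γ} := by
  refine HasThresholdLowerBound.exists_le_add ?_
  set g₀ := deriv (cgf h μ₀)
  set g₁ := deriv (cgf (-h) ν)
  by_cases hsep : ∃ s t, 0 < s ∧ 0 < t ∧ 0 < g₀ s + g₁ t
  · have hm := nonpos_of_forall_add_mul_le_cgf h₀ h₁ hK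
    have hzero : ∀ {X : E → ℝ} {μ : Measure E} [IsProbabilityMeasure μ],
        Ioi 0 ⊆ integrableExpSet X μ →
          ∀ᶠ s in 𝓝[>] 0, m - ε / 2 < cgf X μ s - s * deriv (cgf X μ) s :=
      fun hX => (tendsto_cgf_sub_mul_deriv_cgf_nhdsGT_zero hX).eventually
        (eventually_gt_nhds (by linarith))
    obtain ⟨s, t, hs, ht, hFs, hFt, hst⟩ := exists_le_le_add_pos
      (F₀ := fun s => cgf h μ₀ s - s * g₀ s) (F₁ := fun t => cgf (-h) ν t - t * g₁ t)
      (fun s t hs ht => by linarith [hK s t hs ht])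
      ((continuousOn_cgf_Ioi h₀).sub (continuousOn_id.mul (continuousOn_deriv_cgf_Ioi h₀)))
      ((continuousOn_cgf_Ioi h₁).sub (continuousOn_id.mul (continuousOn_deriv_cgf_Ioi h₁)))
      (fun s hs => by linarith [cgf_le_mul_deriv_cgf h₀ hs])
      (fun t ht => by linarith [cgf_le_mul_deriv_cgf h₁ ht])
      (half_pos hε) (hzero h₀) (hzero h₁) hsep
    exact hasThresholdLowerBound_of_tilt hh h₀ h₁ hs ht (by linarith) (by linarith) hst
  · push Not at hsep
    have hbdd : BddAbove (g₀ '' Ioi 0) := ⟨-g₁ 1, by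
      rintro _ ⟨s, hs, rfl⟩
      linarith [hsep s 1 hs one_pos]⟩
    have hc₀ : ∀ s > 0, g₀ s ≤ sSup (g₀ '' Ioi 0) := fun s hs => le_csSup hbdd ⟨s, hs, rfl⟩
    have hc₁ : ∀ t > 0, g₁ t ≤ -sSup (g₀ '' Ioi 0) := fun t ht => by
      have : sSup (g₀ '' Ioi 0) ≤ -g₁ t := csSup_le ⟨g₀ 1, 1, mem_Ioi.2 one_pos, rfl⟩ <| by
        rintro _ ⟨s, hs, rfl⟩
        linarith [hsep s t hs ht]
      linarith
    exact (hasThresholdLowerBound_of_ae_le hh h₀ h₁ hK (ae_le_of_forall_deriv_cgf_le h₀ hc₀)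
      (ae_le_of_forall_deriv_cgf_le h₁ hc₁)).mono (by linarith)

end Threshold

end ProbabilityTheory

theorem stmt_15_general
    {E : Type*} [MeasurableSpace E]
    (μ0 : Measure E) [IsProbabilityMeasure μ0]
    (h : E → ℝ) (hmeas : Measurable h)
    (ν : Measure E) [IsProbabilityMeasure ν]
    (hexp0 : ∀ l : ℝ, 0 < l → Integrable (fun x => Real.exp (l * h x)) μ0)
    (hexp1 : ∀ l : ℝ, 0 < l → Integrable (fun x => Real.exp (-l * h x)) ν)
    (S : EReal)
    (hS : S = -(⨅ l₁ : {l : ℝ // 0 < l}, ⨅ l₂ : {l : ℝ // 0 < l},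
      ((l₂.1 / (l₁.1 + l₂.1) * Real.log (∫ x, Real.exp (l₁.1 * h x) ∂μ0)
        + l₁.1 / (l₁.1 + l₂.1) * Real.log (∫ x, Real.exp (-l₂.1 * h x) ∂ν) : ℝ) : EReal))) :
    ∀ b ∈ Set.Ioo (0:ℝ) 1, ∃ N : ℕ, ∀ n ≥ N,
      ENNReal.ofReal b * EReal.exp (-S)
        ≤ ⨅ γ : ℝ,
            (Measure.pi (fun _ : Fin n => μ0) {y | γ ≤ ∑ t, h (y t)}
              + Measure.pi (fun _ : Fin n => ν) {y | ∑ t, h (y t) < γ}) ^ ((n : ℝ)⁻¹) := by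
  intro b hb
  have hcgf : ∀ l, Real.log (∫ x, Real.exp (-l * h x) ∂ν) = cgf (-h) ν l := fun l => by
    simp [cgf, mgf]
  have hle : ∀ s t : {l : ℝ // 0 < l}, -S ≤ ((t.1 / (s.1 + t.1) * cgf h μ0 s
      + s.1 / (s.1 + t.1) * cgf (-h) ν t : ℝ) : EReal) := fun s t => by
    rw [hS, neg_neg, ← hcgf]
    exact (iInf_le _ s).trans (iInf_le _ t)
  cases hSm : -S using EReal.rec with
  | bot => exact ⟨0, fun n _ => by simp⟩
  | top => exact absurd (hSm ▸ hle ⟨1, one_pos⟩ ⟨1, one_pos⟩) (EReal.coe_lt_top _).not_ge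
  | coe m =>
    have hK : ∀ s t, 0 < s → 0 < t → (s + t) * m ≤ t * cgf h μ0 s + s * cgf (-h) ν t :=
      fun s t hs ht => by
        have := EReal.coe_le_coe_iff.1 (hSm ▸ hle ⟨s, hs⟩ ⟨t, ht⟩)
        dsimp only at this
        rw [div_mul_eq_mul_div, div_mul_eq_mul_div, ← add_div, le_div_iff₀ (by positivity)] at this
        linarith
    have h₁ : Ioi 0 ⊆ integrableExpSet (-h) ν := fun l hl => by
      simpa [integrableExpSet] using hexp1 l hl
    obtain ⟨N, hN⟩ := exists_ofReal_exp_le_pi_add_pi hmeas (fun l hl => hexp0 l hl) h₁ hK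
      (neg_pos.2 (Real.log_neg hb.1 hb.2))
    refine ⟨N + 1, fun n hn => le_iInf fun γ => ?_⟩
    have hn0 : (n : ℝ) ≠ 0 := by norm_cast; omega
    calc ENNReal.ofReal b * EReal.exp m
        = ENNReal.ofReal (Real.exp (n * (m - -Real.log b))) ^ (n : ℝ)⁻¹ := by
          rw [ENNReal.ofReal_rpow_of_nonneg (Real.exp_nonneg _) (by positivity), ← Real.exp_mul,
            mul_comm (n : ℝ), mul_assoc, mul_inv_cancel₀ hn0, mul_one, sub_neg_eq_add,
            Real.exp_add, Real.exp_log hb.1, ENNReal.ofReal_mul (Real.exp_nonneg _),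
            EReal.exp_coe, mul_comm]
      _ ≤ _ := ENNReal.rpow_le_rpow (hN n (by omega) γ) (by positivity)

/-- Let `μ0` be the null law of the pivotal statistic and `ν` the law under
the least-favorable alternative, with `∫ e^{λh} dμ0 < ∞` and `∫ e^{−λh} dν < ∞` for every
`λ > 0`. Define `S_ν = − inf_{λ₁,λ₂ > 0} [ (λ₂/(λ₁+λ₂)) log ∫ e^{λ₁ h} dμ0
  + (λ₁/(λ₁+λ₂)) log ∫ e^{−λ₂ h} dν ]`. Then for every `b ∈ (0,1)` there is `N` such that
for all `n ≥ N` and every threshold `γ`,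
`[ ℙ_{μ0^{⊗n}}(∑ h(Y_t) ≥ γ) + ℙ_{ν^{⊗n}}(∑ h(Y_t) < γ) ]^{1/n} ≥ b e^{−S_ν}`: no threshold
for the test based on `∑ h(Y_t)` achieves a faster exponential decay rate than `S_ν`. -/
theorem stmt_15
    {E : Type*} [MeasurableSpace E]
    (μ0 : Measure E) [IsProbabilityMeasure μ0]
    (h : E → ℝ) (hmeas : Measurable h) (hint : Integrable h μ0)
    (ν : Measure E) [IsProbabilityMeasure ν]
    (hexp0 : ∀ l : ℝ, 0 < l → Integrable (fun x => Real.exp (l * h x)) μ0)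
    (hexp1 : ∀ l : ℝ, 0 < l → Integrable (fun x => Real.exp (-l * h x)) ν)
    (S : EReal)
    (hS : S = -(⨅ l₁ : {l : ℝ // 0 < l}, ⨅ l₂ : {l : ℝ // 0 < l},
      ((l₂.1 / (l₁.1 + l₂.1) * Real.log (∫ x, Real.exp (l₁.1 * h x) ∂μ0)
        + l₁.1 / (l₁.1 + l₂.1) * Real.log (∫ x, Real.exp (-l₂.1 * h x) ∂ν) : ℝ) : EReal))) :
    ∀ b ∈ Set.Ioo (0:ℝ) 1, ∃ N : ℕ, ∀ n ≥ N,
      ENNReal.ofReal b * EReal.exp (-S)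
        ≤ ⨅ γ : ℝ,
            (Measure.pi (fun _ : Fin n => μ0) {y | γ ≤ ∑ t, h (y t)}
              + Measure.pi (fun _ : Fin n => ν) {y | ∑ t, h (y t) < γ}) ^ ((n : ℝ)⁻¹) :=
  stmt_15_general μ0 h hmeas ν hexp0 hexp1 S hS
end

section
/- Let p = (p_1, …, p_m) be a probability vector (p_i ≥ 0, ∑ p_i = 1) with at least two nonzero entries, let U_1, …, U_m be i.i.d. Uniform(0,1), and let I = argmax_{i : p_i > 0} (log U_i)/p_i. Then the law of the pivotal statistic Y = U_I is absolutely continuous on [0,1] with density r ↦ ∑_{i : p_i > 0} r^{(1−p_i)/p_i}. In particular, for Δ ∈ (0,1), k = ⌊1/(1−Δ)⌋, Δ̃ = (1−Δ)k, and the least-favorable distribution p* = (1−Δ, …, 1−Δ, 1−(1−Δ)k, 0, …, 0) (with k coordinates equal to 1−Δ), the density of Y equals r ↦ k r^{Δ/(1−Δ)} + r^{Δ̃/(1−Δ̃)} = e^{h*_Δ(r)}, where h*_Δ is the optimal score function of the complete-inheritance problem and r^{Δ̃/(1−Δ̃)} is interpreted as 0 for r ∈ (0,1) when Δ̃ = 1.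 -/
open MeasureTheory Filter Set ENNReal

/-- The density of the Gumbel-max pivotal statistic under complete inheritance:
`g_p(r) = ∑_{i : p_i > 0} r^{(1−p_i)/p_i}`. -/
noncomputable def gden (m : ℕ) (p : Fin m → ℝ) (r : ℝ) : ℝ :=
  ∑ i ∈ Finset.univ.filter (fun i => 0 < p i), r ^ ((1 - p i) / p i)

/-- The optimal score function `h*_Δ(r) = log( k r^{Δ/(1−Δ)} + r^{Δ̃/(1−Δ̃)} )` with
`k = ⌊1/(1−Δ)⌋`, `Δ̃ = (1−Δ)k`, and the convention `r^{Δ̃/(1−Δ̃)} = 0` on `(0,1)` when `Δ̃ = 1`. -/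
noncomputable def hstarC (Δ : ℝ) (r : ℝ) : ℝ :=
  Real.log ((⌊(1 - Δ)⁻¹⌋₊ : ℝ) * r ^ (Δ / (1 - Δ))
    + (if (1 - Δ) * ⌊(1 - Δ)⁻¹⌋₊ = 1 then 0
       else r ^ ((1 - Δ) * ⌊(1 - Δ)⁻¹⌋₊ / (1 - (1 - Δ) * ⌊(1 - Δ)⁻¹⌋₊))))

/-- The least-favorable distribution `p* = (1−Δ, …, 1−Δ, 1−(1−Δ)k, 0, …, 0)` with
`k = ⌊1/(1−Δ)⌋` coordinates equal to `1−Δ`. -/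
noncomputable def pstar (m : ℕ) (Δ : ℝ) : Fin m → ℝ :=
  fun i =>
    if (i : ℕ) < ⌊(1 - Δ)⁻¹⌋₊ then 1 - Δ
    else if (i : ℕ) = ⌊(1 - Δ)⁻¹⌋₊ then 1 - (1 - Δ) * ⌊(1 - Δ)⁻¹⌋₊
    else 0


/-!
Fix `i` with `p_i > 0` and condition on `U_i = x ∈ (0,1)`. For `j ≠ i` with `p_j > 0` the
comparison `log U_j / p_j < log x / p_i` says exactly `U_j < x ^ (p_j / p_i)`; for `p_j = 0` this
bound reads `U_j < 1`, which always holds. Hence `{I = i, Y ∈ A}` has probability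

  `∫_{A ∩ (0,1)} ∏_{j ≠ i} x ^ (p_j / p_i) dx = ∫_{A ∩ (0,1)} x ^ ((1 - p_i) / p_i) dx`

since `∑_j p_j = 1`, and summing over `i` gives the density `gden`. At `p*` the positive entries
are `k` copies of `1 - Δ`, each contributing `r ^ (Δ/(1-Δ))`, and `1 - Δ̃`, which contributes
`r ^ (Δ̃/(1-Δ̃))` unless it vanishes.
-/

def IsGumbelArgmax {ι : Type*} (p u : ι → ℝ) (i : ι) : Prop :=
  0 < p i ∧ ∀ j, 0 < p j → j ≠ i → Real.log (u j) / p j < Real.log (u i) / p i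

theorem IsGumbelArgmax.unique {ι : Type*} {p u : ι → ℝ} {i j : ι} (hi : IsGumbelArgmax p u i)
    (hj : IsGumbelArgmax p u j) : i = j := by
  by_contra hij
  exact lt_asymm (hi.2 j hj.1 (Ne.symm hij)) (hj.2 i hi.1 hij)

theorem measurableSet_isGumbelArgmax {ι : Type*} [Countable ι] (p : ι → ℝ) (i : ι) :
    MeasurableSet {u : ι → ℝ | IsGumbelArgmax p u i} := by
  unfold IsGumbelArgmax
  measurability

theorem Real.log_div_lt_log_div_iff_lt_rpow {x z a b : ℝ} (hx : 0 < x) (hz : 0 < z)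
    (ha : 0 < a) : Real.log z / a < Real.log x / b ↔ z < x ^ (a / b) := by
  rw [← Real.log_lt_log_iff hz (Real.rpow_pos_of_pos hx _), Real.log_rpow hx, div_lt_iff₀ ha,
    div_mul_comm]

theorem imp_log_div_lt_iff_lt_rpow {x z a b : ℝ} (hx : 0 < x) (hz : z ∈ Ioo 0 1) (ha : 0 ≤ a) :
    (0 < a → Real.log z / a < Real.log x / b) ↔ z < x ^ (a / b) := by
  rcases ha.eq_or_lt with rfl | ha
  · simp [hz.2]
  · simp only [ha, true_imp_iff]
    exact Real.log_div_lt_log_div_iff_lt_rpow hx hz.1 ha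

theorem volume_restrict_Ioo_zero_one_apply_Ioo {c : ℝ} (hc : c ≤ 1) :
    volume.restrict (Ioo (0 : ℝ) 1) (Ioo 0 c) = ENNReal.ofReal c := by
  rw [Measure.restrict_apply measurableSet_Ioo, inter_eq_left.mpr (Ioo_subset_Ioo_right hc),
    Real.volume_Ioo, sub_zero]

theorem MeasureTheory.Measure.prod_pi_setOf_mem_pi {α β ι : Type*} [MeasurableSpace α]
    [MeasurableSpace β] [Fintype ι] (ν : Measure α) (μ : ι → Measure β)
    [∀ j, SigmaFinite (μ j)] {B : Set α} (hB : MeasurableSet B) (t : ι → α → Set β)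
    (hs : MeasurableSet {q : α × (ι → β) | q.1 ∈ B ∧ ∀ j, q.2 j ∈ t j q.1}) :
    ν.prod (Measure.pi μ) {q | q.1 ∈ B ∧ ∀ j, q.2 j ∈ t j q.1}
      = ∫⁻ x in B, ∏ j, μ j (t j x) ∂ν := by
  rw [Measure.prod_apply hs, ← lintegral_indicator hB]
  congr 1 with x
  by_cases hx : x ∈ B
  · rw [indicator_of_mem hx, ← Measure.pi_pi]
    congr 1 with v
    simp [hx]
  · rw [indicator_of_notMem hx]
    simp [hx]

theorem prod_volume_restrict_Ioo_rpow {n : ℕ} (p : Fin (n + 1) → ℝ) (hp : ∀ j, 0 ≤ p j)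
    (hpsum : ∑ j, p j = 1) {i : Fin (n + 1)} (hpi : 0 < p i) {x : ℝ} (hx : x ∈ Ioo 0 1) :
    ∏ j, volume.restrict (Ioo (0 : ℝ) 1) (Ioo 0 (x ^ (p (i.succAbove j) / p i)))
      = ENNReal.ofReal (x ^ ((1 - p i) / p i)) := by
  simp_rw [volume_restrict_Ioo_zero_one_apply_Ioo
    (Real.rpow_le_one hx.1.le hx.2.le (div_nonneg (hp _) hpi.le))]
  rw [← ENNReal.ofReal_prod_of_nonneg (fun j _ => Real.rpow_nonneg hx.1.le _),
    ← Real.rpow_sum_of_pos hx.1, ← Finset.sum_div]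
  congr 3
  linarith [Fin.sum_univ_succAbove p i]

theorem pi_uniform_setOf_isGumbelArgmax {m : ℕ} (p : Fin m → ℝ) (hp : ∀ j, 0 ≤ p j)
    (hpsum : ∑ j, p j = 1) {i : Fin m} (hpi : 0 < p i) {A : Set ℝ} (hA : MeasurableSet A) :
    (Measure.pi fun _ : Fin m => volume.restrict (Ioo (0 : ℝ) 1))
        {u | u i ∈ A ∧ IsGumbelArgmax p u i}
      = ∫⁻ x in A ∩ Ioo 0 1, ENNReal.ofReal (x ^ ((1 - p i) / p i)) := by
  obtain ⟨n, rfl⟩ : ∃ n, m = n + 1 := Nat.exists_eq_succ_of_ne_zero i.pos.ne'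
  set ν := volume.restrict (Ioo (0 : ℝ) 1)
  set s : Set (ℝ × (Fin n → ℝ)) :=
    {q | q.1 ∈ A ∩ Ioo 0 1 ∧ ∀ j, q.2 j ∈ Ioo 0 (q.1 ^ (p (i.succAbove j) / p i))}
  have hs : MeasurableSet s := by measurability
  have hunif : ∀ᵐ u : Fin (n + 1) → ℝ ∂Measure.pi fun _ => ν, ∀ j, u j ∈ Ioo (0 : ℝ) 1 :=
    eventually_all.2 fun j =>
      Measure.tendsto_eval_ae_ae.eventually (ae_restrict_mem measurableSet_Ioo)
  have hae : {u | u i ∈ A ∧ IsGumbelArgmax p u i}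
      =ᵐ[Measure.pi fun _ => ν] MeasurableEquiv.piFinSuccAbove (fun _ => ℝ) i ⁻¹' s := by
    filter_upwards [hunif] with u hu
    change (u i ∈ A ∧ IsGumbelArgmax p u i) = (u i ∈ A ∩ Ioo 0 1 ∧
      ∀ j, u (i.succAbove j) ∈ Ioo 0 (u i ^ (p (i.succAbove j) / p i)))
    have hwins : ∀ j, (0 < p (i.succAbove j) →
        Real.log (u (i.succAbove j)) / p (i.succAbove j) < Real.log (u i) / p i)
          ↔ u (i.succAbove j) ∈ Ioo 0 (u i ^ (p (i.succAbove j) / p i)) := fun j =>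
      (imp_log_div_lt_iff_lt_rpow (hu i).1 (hu _) (hp _)).trans
        ⟨fun h => ⟨(hu _).1, h⟩, And.right⟩
    simp only [IsGumbelArgmax, Fin.forall_iff_succAbove i, ne_eq, not_true_eq_false,
      Fin.succAbove_ne, not_false_eq_true, true_imp_iff]
    simp [hwins, hpi, hu i]
  rw [measure_congr hae,
    (measurePreserving_piFinSuccAbove (fun _ => ν) i).measure_preimage hs.nullMeasurableSet]
  refine (Measure.prod_pi_setOf_mem_pi _ _ (hA.inter measurableSet_Ioo)
    (fun j x => Ioo 0 (x ^ (p (i.succAbove j) / p i))) hs).trans ?_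
  rw [Measure.restrict_restrict (hA.inter measurableSet_Ioo), inter_assoc, inter_self]
  exact setLIntegral_congr_fun (hA.inter measurableSet_Ioo)
    fun x hx => prod_volume_restrict_Ioo_rpow p hp hpsum hpi hx.2

theorem map_gumbelPivot_eq_withDensity {Ω : Type*} [MeasurableSpace Ω] (μ : Measure Ω) (m : ℕ)
    (p : Fin m → ℝ) (hp : ∀ i, 0 ≤ p i) (hpsum : ∑ i, p i = 1) (U : Fin m → Ω → ℝ)
    (hU : ∀ i, Measurable (U i))
    (hUlaw : μ.map (fun ω i => U i ω)
      = Measure.pi fun _ : Fin m => volume.restrict (Ioo (0 : ℝ) 1))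
    (I : Ω → Fin m) (hI : Measurable I)
    (hargmax : ∀ᵐ ω ∂μ, IsGumbelArgmax p (fun j => U j ω) (I ω)) :
    μ.map (fun ω => U (I ω) ω)
      = (volume.restrict (Icc (0 : ℝ) 1)).withDensity fun r => ENNReal.ofReal (gden m p r) := by
  set E : Fin m → Set ℝ → Set (Fin m → ℝ) := fun i A => {u | u i ∈ A ∧ IsGumbelArgmax p u i}
  have hE : ∀ i {A}, MeasurableSet A → MeasurableSet (E i A) := fun i A hA =>
    (measurable_pi_apply i hA).inter (measurableSet_isGumbelArgmax p i)
  have hW : Measurable fun ω i => U i ω := measurable_pi_lambda _ hU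
  have hY : Measurable fun ω => U (I ω) ω :=
    (measurable_from_prod_countable_left (f := fun q : Ω × Fin m => U q.2 q.1) hU).comp
      (measurable_id.prodMk hI)
  ext A hA
  have hpivot : (fun ω => U (I ω) ω) ⁻¹' A =ᵐ[μ] (fun ω i => U i ω) ⁻¹' ⋃ i, E i A := by
    filter_upwards [hargmax] with ω hω
    refine propext ⟨fun h => mem_iUnion.2 ⟨I ω, h, hω⟩, fun h => ?_⟩
    obtain ⟨i, hi, hωi⟩ := mem_iUnion.1 h
    rwa [hωi.unique hω] at hi
  have hdisj : Pairwise (Function.onFun Disjoint fun i => E i A) := fun i j hij =>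
    disjoint_left.2 fun u hi hj => hij (hi.2.unique hj.2)
  rw [Measure.map_apply hY hA, measure_congr hpivot,
    ← Measure.map_apply hW (.iUnion fun i => hE i hA), hUlaw,
    measure_iUnion hdisj fun i => hE i hA, tsum_fintype]
  calc ∑ i, (Measure.pi fun _ => volume.restrict (Ioo (0 : ℝ) 1)) (E i A)
      = ∑ i with 0 < p i, (Measure.pi fun _ => volume.restrict (Ioo (0 : ℝ) 1)) (E i A) :=
        (Finset.sum_filter_of_ne fun i _ hi =>
          by_contra fun h => hi (by simp [E, IsGumbelArgmax, h])).symm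
    _ = ∑ i with 0 < p i, ∫⁻ x in A ∩ Ioo 0 1, ENNReal.ofReal (x ^ ((1 - p i) / p i)) :=
        Finset.sum_congr rfl fun i hi =>
          pi_uniform_setOf_isGumbelArgmax p hp hpsum (Finset.mem_filter.1 hi).2 hA
    _ = ∫⁻ x in A ∩ Ioo 0 1, ENNReal.ofReal (gden m p x) := by
        rw [← lintegral_finsetSum _ fun i _ => by fun_prop]
        refine setLIntegral_congr_fun (hA.inter measurableSet_Ioo) fun x hx => ?_
        rw [gden, ENNReal.ofReal_sum_of_nonneg fun i _ => Real.rpow_nonneg hx.2.1.le _]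
    _ = _ := by
        rw [withDensity_apply _ hA, Measure.restrict_restrict hA]
        exact setLIntegral_congr (ae_eq_set_inter (ae_eq_refl A) Ioo_ae_eq_Icc)

theorem gden_pos {m : ℕ} {p : Fin m → ℝ} (hpsum : ∑ i, p i = 1) {r : ℝ} (hr : 0 < r) :
    0 < gden m p r := by
  obtain ⟨i, -, hi⟩ := Finset.exists_lt_of_sum_lt (s := Finset.univ) (f := 0) (g := p)
    (by simp [hpsum])
  exact Finset.sum_pos (fun j _ => Real.rpow_pos_of_pos hr _) ⟨i, by simpa using hi⟩

theorem gden_pstar (m : ℕ) {Δ : ℝ} (hΔ : Δ < 1) (hpsum : ∑ i, pstar m Δ i = 1) (r : ℝ) :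
    gden m (pstar m Δ) r
      = (⌊(1 - Δ)⁻¹⌋₊ : ℝ) * r ^ (Δ / (1 - Δ))
        + (if (1 - Δ) * ⌊(1 - Δ)⁻¹⌋₊ = 1 then 0
           else r ^ ((1 - Δ) * ⌊(1 - Δ)⁻¹⌋₊ / (1 - (1 - Δ) * ⌊(1 - Δ)⁻¹⌋₊))) := by
  obtain ⟨δ, rfl⟩ : ∃ δ, Δ = 1 - δ := ⟨1 - Δ, by ring⟩
  have hδ : 0 < δ := by linarith
  simp only [_root_.sub_sub_cancel]
  set k := ⌊δ⁻¹⌋₊ with hk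
  set φ : ℝ → ℝ := fun t => if 0 < t then r ^ ((1 - t) / t) else 0
  have hδk : δ * k ≤ 1 :=
    (mul_le_mul_of_nonneg_left (Nat.floor_le (inv_nonneg.2 hδ.le)) hδ.le).trans_eq
      (mul_inv_cancel₀ hδ.ne')
  set q : ℕ → ℝ := fun j => if j < k then δ else if j = k then 1 - δ * k else 0
  have hsum_range : ∀ f : ℝ → ℝ, ∑ i, f (pstar m (1 - δ) i) = ∑ j ∈ Finset.range m, f (q j) :=
    fun f => by
      simp only [pstar, _root_.sub_sub_cancel]
      exact Fin.sum_univ_eq_sum_range (fun j => f (q j)) m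
  have hφ0 : φ 0 = 0 := if_neg (lt_irrefl 0)
  have hterms : gden m (pstar m (1 - δ)) r = k * φ δ + φ (1 - δ * k) := by
    rw [gden, Finset.sum_filter, hsum_range φ]
    rcases lt_or_ge k m with hkm | hmk
    · rw [← Finset.sum_range_add_sum_Ico _ (hkm : k + 1 ≤ m),
        Finset.sum_eq_zero (s := Finset.Ico (k + 1) m) fun j hj => ?_, add_zero,
        Finset.sum_range_succ,
        Finset.sum_congr rfl fun j hj => congrArg φ (if_pos (Finset.mem_range.1 hj)),
        Finset.sum_const, Finset.card_range, nsmul_eq_mul]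
      · simp [q]
      · have hkj : k < j := (Finset.mem_Ico.1 hj).1
        simp [q, hkj.not_gt, hkj.ne', hφ0]
    · have hconst : ∀ f : ℝ → ℝ, ∑ j ∈ Finset.range m, f (q j) = m * f δ := fun f => by
        rw [Finset.sum_congr rfl fun j hj =>
            congrArg f (if_pos ((Finset.mem_range.1 hj).trans_le hmk)),
          Finset.sum_const, Finset.card_range, nsmul_eq_mul]
      have hmδ : (m : ℝ) * δ = 1 :=
        ((hconst id).symm.trans (hsum_range id).symm).trans hpsum
      have hkm : k = m := by rw [hk, inv_eq_of_mul_eq_one_left hmδ, Nat.floor_natCast]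
      rw [hconst, hkm, mul_comm δ, hmδ, sub_self, hφ0, add_zero]
  have hφδ : φ δ = r ^ ((1 - δ) / δ) := if_pos hδ
  have hφk : φ (1 - δ * k) = if δ * k = 1 then 0 else r ^ (δ * k / (1 - δ * k)) := by
    rcases hδk.eq_or_lt with h | h
    · simp [φ, h]
    · simp [φ, h.ne, sub_pos.2 h]
  rw [hterms, hφδ, hφk]

theorem stmt_18_general
    {Ω : Type*} [MeasurableSpace Ω] (μ : Measure Ω)
    (m : ℕ) (p : Fin m → ℝ) (hp : ∀ i, 0 ≤ p i) (hpsum : ∑ i, p i = 1)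
    (U : Fin m → Ω → ℝ) (hUmeas : ∀ i, Measurable (U i))
    (hUlaw : Measure.map (fun ω i => U i ω) μ
      = Measure.pi fun _ : Fin m => volume.restrict (Set.Ioo (0:ℝ) 1))
    (I : Ω → Fin m) (hImeas : Measurable I)
    (hI : ∀ᵐ ω ∂μ, 0 < p (I ω) ∧ ∀ j, 0 < p j → j ≠ I ω →
      Real.log (U j ω) / p j < Real.log (U (I ω) ω) / p (I ω)) :
    Measure.map (fun ω => U (I ω) ω) μ
      = (volume.restrict (Set.Icc (0:ℝ) 1)).withDensity
          (fun r => ENNReal.ofReal (gden m p r))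
    ∧ ∀ Δ ∈ Set.Ioo (0:ℝ) 1, p = pstar m Δ →
        ∀ r ∈ Set.Ioo (0:ℝ) 1,
          gden m p r
            = (⌊(1 - Δ)⁻¹⌋₊ : ℝ) * r ^ (Δ / (1 - Δ))
                + (if (1 - Δ) * ⌊(1 - Δ)⁻¹⌋₊ = 1 then 0
                   else r ^ ((1 - Δ) * ⌊(1 - Δ)⁻¹⌋₊
                     / (1 - (1 - Δ) * ⌊(1 - Δ)⁻¹⌋₊)))
          ∧ gden m p r = Real.exp (hstarC Δ r) := by
  refine ⟨map_gumbelPivot_eq_withDensity μ m p hp hpsum U hUmeas hUlaw I hImeas hI, ?_⟩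
  rintro Δ hΔ rfl r hr
  have hdensity := gden_pstar m hΔ.2 hpsum r
  exact ⟨hdensity, by rw [hstarC, ← hdensity, Real.exp_log (gden_pos hpsum hr.1)]⟩

/-- Let `p` be a probability vector with at least two nonzero entries,
`U_1, …, U_m` i.i.d. `Uniform(0,1)`, and `I = argmax_{i : p_i > 0} (log U_i)/p_i`. Then the law
of the pivotal statistic `Y = U_I` is absolutely continuous on `[0,1]` with density
`r ↦ ∑_{i : p_i > 0} r^{(1−p_i)/p_i}`. In particular, for the least-favorable distribution
`p* = pstar m Δ` the density equals `r ↦ k r^{Δ/(1−Δ)} + r^{Δ̃/(1−Δ̃)} = e^{h*_Δ(r)}`. -/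
theorem stmt_18
    {Ω : Type*} [MeasurableSpace Ω] (μ : Measure Ω) [IsProbabilityMeasure μ]
    (m : ℕ) (p : Fin m → ℝ) (hp : ∀ i, 0 ≤ p i) (hpsum : ∑ i, p i = 1)
    (htwo : 2 ≤ (Finset.univ.filter (fun i => 0 < p i)).card)
    (U : Fin m → Ω → ℝ) (hUmeas : ∀ i, Measurable (U i))
    (hUlaw : Measure.map (fun ω i => U i ω) μ
      = Measure.pi fun _ : Fin m => volume.restrict (Set.Ioo (0:ℝ) 1))
    (I : Ω → Fin m) (hImeas : Measurable I)
    (hI : ∀ᵐ ω ∂μ, 0 < p (I ω) ∧ ∀ j, 0 < p j → j ≠ I ω →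
      Real.log (U j ω) / p j < Real.log (U (I ω) ω) / p (I ω)) :
    Measure.map (fun ω => U (I ω) ω) μ
      = (volume.restrict (Set.Icc (0:ℝ) 1)).withDensity
          (fun r => ENNReal.ofReal (gden m p r))
    ∧ ∀ Δ ∈ Set.Ioo (0:ℝ) 1, p = pstar m Δ →
        ∀ r ∈ Set.Ioo (0:ℝ) 1,
          gden m p r
            = (⌊(1 - Δ)⁻¹⌋₊ : ℝ) * r ^ (Δ / (1 - Δ))
                + (if (1 - Δ) * ⌊(1 - Δ)⁻¹⌋₊ = 1 then 0
                   else r ^ ((1 - Δ) * ⌊(1 - Δ)⁻¹⌋₊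
                     / (1 - (1 - Δ) * ⌊(1 - Δ)⁻¹⌋₊)))
          ∧ gden m p r = Real.exp (hstarC Δ r) :=
  stmt_18_general μ m p hp hpsum U hUmeas hUlaw I hImeas hI
end
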